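/- Let A be a Δ-separable Frobenius algebra in an idempotent complete additive monoidal category C, and let M be a right A-module and N a left A-module. Then the endomorphism e = (ρ_M ⊗ λ_N) ∘ (id_M ⊗ Δ∘η ⊗ id_N) of M ⊗ N (inserting the Frobenius 'splitting' of A between M and N) is an idempotent, and its image computes the relative tensor product M ⊗_A N, i.e. it coequalizes the two actions and splits the canonical projection M ⊗ N → M ⊗_A N. -/

import Mathlib

open CategoryTheory MonoidalCategory

/-- A Frobenius algebra in a monoidal category. -/
structure Frob (C : Type*) [Category C] [MonoidalCategory C] (A : C) where
  mul : A ⊗ A ⟶ A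
  one : 𝟙_ C ⟶ A
  comul : A ⟶ A ⊗ A
  counit : A ⟶ 𝟙_ C
  mul_assoc' : (α_ A A A).hom ≫ (A ◁ mul) ≫ mul = (mul ▷ A) ≫ mul
  one_mul' : (one ▷ A) ≫ mul = (λ_ A).hom
  mul_one' : (A ◁ one) ≫ mul = (ρ_ A).hom
  comul_assoc' : comul ≫ (A ◁ comul) = comul ≫ (comul ▷ A) ≫ (α_ A A A).hom
  counit_comul' : comul ≫ (counit ▷ A) = (λ_ A).inv
  comul_counit' : comul ≫ (A ◁ counit) = (ρ_ A).inv
  frob_left : mul ≫ comul = (comul ▷ A) ≫ (α_ A A A).hom ≫ (A ◁ mul)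
  frob_right : mul ≫ comul = (A ◁ comul) ≫ (α_ A A A).inv ≫ (mul ▷ A)

/-- The endomorphism of `M ⊗ N` inserting the Frobenius splitting `Δ ∘ η` of a
Δ-separable Frobenius algebra `A` between a right module `M` and a left module
`N`. -/
def sepIdem {C : Type*} [Category C] [MonoidalCategory C] {A M N : C}
    (F : Frob C A) (ract : M ⊗ A ⟶ M) (lact : A ⊗ N ⟶ N) : M ⊗ N ⟶ M ⊗ N :=
  (M ◁ (λ_ N).inv) ≫ (M ◁ ((F.one ≫ F.comul) ▷ N)) ≫ (M ◁ (α_ A A N).hom) ≫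
    (α_ M A (A ⊗ N)).inv ≫ (ract ⊗ₘ lact)

/-- For a Δ-separable Frobenius algebra `A`, a right `A`-module `M` and a left
`A`-module `N`, the map `e = (ρ_M ⊗ λ_N) ∘ (id ⊗ Δη ⊗ id)` on `M ⊗ N` is an
idempotent, it coequalizes the two `A`-actions, and its image computes the
relative tensor product `M ⊗_A N`: any map coequalizing the two actions is
absorbed by `e`, so `e` splits the canonical projection `M ⊗ N → M ⊗_A N`. -/
theorem stmt_12 {C : Type*} [Category C] [MonoidalCategory C] {A M N : C}
    (F : Frob C A) (hΔ : F.comul ≫ F.mul = 𝟙 A)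
    (ract : M ⊗ A ⟶ M) (lact : A ⊗ N ⟶ N)
    (hra : (α_ M A A).hom ≫ (M ◁ F.mul) ≫ ract = (ract ▷ A) ≫ ract)
    (hru : (M ◁ F.one) ≫ ract = (ρ_ M).hom)
    (hla : (α_ A A N).inv ≫ (F.mul ▷ N) ≫ lact = (A ◁ lact) ≫ lact)
    (hlu : (F.one ▷ N) ≫ lact = (λ_ N).hom) :
    sepIdem F ract lact ≫ sepIdem F ract lact = sepIdem F ract lact
    ∧ (ract ▷ N) ≫ sepIdem F ract lact
        = (α_ M A N).hom ≫ (M ◁ lact) ≫ sepIdem F ract lact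
    ∧ ∀ (T : C) (h : M ⊗ N ⟶ T),
        (ract ▷ N) ≫ h = (α_ M A N).hom ≫ (M ◁ lact) ≫ h →
        sepIdem F ract lact ≫ h = h := by
  have hs : (F.one ≫ F.comul) ≫ F.mul = F.one := by
    rw [Category.assoc, hΔ, Category.comp_id]
  have keyL : (λ_ A).inv ≫ ((F.one ≫ F.comul) ▷ A) ≫ (α_ A A A).hom ≫ (A ◁ F.mul)
      = F.comul := by
    rw [comp_whiskerRight, Category.assoc, ← F.frob_left, reassoc_of% F.one_mul',
      Iso.inv_hom_id_assoc]
  have keyR : (ρ_ A).inv ≫ (A ◁ (F.one ≫ F.comul)) ≫ (α_ A A A).inv ≫ (F.mul ▷ A)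
      = F.comul := by
    rw [MonoidalCategory.whiskerLeft_comp, Category.assoc, ← F.frob_right,
      reassoc_of% F.mul_one', Iso.inv_hom_id_assoc]
  -- Part 3: absorption
  have p3 : ∀ (T : C) (h : M ⊗ N ⟶ T),
      (ract ▷ N) ≫ h = (α_ M A N).hom ≫ (M ◁ lact) ≫ h →
      sepIdem F ract lact ≫ h = h := by
    intro T h hco
    have hc' : (M ◁ lact) ≫ h = (α_ M A N).inv ≫ (ract ▷ N) ≫ h := by
      rw [hco, Iso.inv_hom_id_assoc]
    have nat1 : (ract ▷ (A ⊗ N)) ≫ (α_ M A N).inv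
        = (α_ (M ⊗ A) A N).inv ≫ ((ract ▷ A) ▷ N) := by monoidal
    calc sepIdem F ract lact ≫ h
        = (M ◁ (λ_ N).inv) ≫ (M ◁ ((F.one ≫ F.comul) ▷ N)) ≫ (M ◁ (α_ A A N).hom) ≫
            (α_ M A (A ⊗ N)).inv ≫ (ract ▷ (A ⊗ N)) ≫ (M ◁ lact) ≫ h := by
          simp only [sepIdem, MonoidalCategory.tensorHom_def, Category.assoc]
      _ = (M ◁ (λ_ N).inv) ≫ (M ◁ ((F.one ≫ F.comul) ▷ N)) ≫ (M ◁ (α_ A A N).hom) ≫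
            (α_ M A (A ⊗ N)).inv ≫ (α_ (M ⊗ A) A N).inv ≫
            (((ract ▷ A) ≫ ract) ▷ N) ≫ h := by
          rw [hc', reassoc_of% nat1]
          simp only [comp_whiskerRight, Category.assoc]
      _ = (M ◁ (λ_ N).inv) ≫ (M ◁ ((F.one ≫ F.comul) ▷ N)) ≫ (M ◁ (α_ A A N).hom) ≫
            (α_ M A (A ⊗ N)).inv ≫ (α_ (M ⊗ A) A N).inv ≫
            (((α_ M A A).hom ≫ (M ◁ F.mul) ≫ ract) ▷ N) ≫ h := by
          rw [← hra]
      _ = ((ρ_ M).inv ▷ N) ≫ ((M ◁ ((F.one ≫ F.comul) ≫ F.mul)) ▷ N) ≫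
            (ract ▷ N) ≫ h := by monoidal
      _ = ((ρ_ M).inv ▷ N) ≫ ((M ◁ F.one) ▷ N) ≫ (ract ▷ N) ≫ h := by rw [hs]
      _ = ((ρ_ M).inv ▷ N) ≫ ((ρ_ M).hom ▷ N) ≫ h := by
          rw [← comp_whiskerRight_assoc (M ◁ F.one) ract, hru]
      _ = h := by simp
  -- Part 2: e coequalizes, via a common middle expression
  have nat2 : (ract ▷ (A ⊗ (A ⊗ N))) ≫ (α_ M A (A ⊗ N)).inv
      = (α_ (M ⊗ A) A (A ⊗ N)).inv ≫ ((ract ▷ A) ▷ (A ⊗ N)) := by monoidal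
  have e2a : (ract ▷ N) ≫ sepIdem F ract lact
      = ((M ◁ F.comul) ▷ N) ≫ (α_ M (A ⊗ A) N).hom ≫ (M ◁ (α_ A A N).hom) ≫
          (α_ M A (A ⊗ N)).inv ≫ (ract ▷ (A ⊗ N)) ≫ (M ◁ lact) := by
    calc (ract ▷ N) ≫ sepIdem F ract lact
        = (ract ▷ N) ≫
            (M ◁ ((λ_ N).inv ≫ ((F.one ≫ F.comul) ▷ N) ≫ (α_ A A N).hom)) ≫
            (α_ M A (A ⊗ N)).inv ≫ (ract ▷ (A ⊗ N)) ≫ (M ◁ lact) := by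
          simp only [sepIdem, MonoidalCategory.tensorHom_def, MonoidalCategory.whiskerLeft_comp,
            Category.assoc]
      _ = ((M ⊗ A) ◁ ((λ_ N).inv ≫ ((F.one ≫ F.comul) ▷ N) ≫ (α_ A A N).hom)) ≫
            (ract ▷ (A ⊗ (A ⊗ N))) ≫
            (α_ M A (A ⊗ N)).inv ≫ (ract ▷ (A ⊗ N)) ≫ (M ◁ lact) := by
          rw [← whisker_exchange_assoc]
      _ = ((M ⊗ A) ◁ ((λ_ N).inv ≫ ((F.one ≫ F.comul) ▷ N) ≫ (α_ A A N).hom)) ≫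
            (α_ (M ⊗ A) A (A ⊗ N)).inv ≫
            (((ract ▷ A) ≫ ract) ▷ (A ⊗ N)) ≫ (M ◁ lact) := by
          rw [reassoc_of% nat2]
          simp only [comp_whiskerRight, Category.assoc]
      _ = ((M ⊗ A) ◁ ((λ_ N).inv ≫ ((F.one ≫ F.comul) ▷ N) ≫ (α_ A A N).hom)) ≫
            (α_ (M ⊗ A) A (A ⊗ N)).inv ≫
            (((α_ M A A).hom ≫ (M ◁ F.mul) ≫ ract) ▷ (A ⊗ N)) ≫ (M ◁ lact) := by
          rw [← hra]
      _ = ((M ◁ ((ρ_ A).inv ≫ (A ◁ (F.one ≫ F.comul)) ≫ (α_ A A A).inv ≫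
              (F.mul ▷ A))) ▷ N) ≫ (α_ M (A ⊗ A) N).hom ≫ (M ◁ (α_ A A N).hom) ≫
            (α_ M A (A ⊗ N)).inv ≫ (ract ▷ (A ⊗ N)) ≫ (M ◁ lact) := by monoidal
      _ = ((M ◁ F.comul) ▷ N) ≫ (α_ M (A ⊗ A) N).hom ≫ (M ◁ (α_ A A N).hom) ≫
            (α_ M A (A ⊗ N)).inv ≫ (ract ▷ (A ⊗ N)) ≫ (M ◁ lact) := by rw [keyR]
  have e2b : (α_ M A N).hom ≫ (M ◁ lact) ≫ sepIdem F ract lact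
      = ((M ◁ F.comul) ▷ N) ≫ (α_ M (A ⊗ A) N).hom ≫ (M ◁ (α_ A A N).hom) ≫
          (α_ M A (A ⊗ N)).inv ≫ (ract ▷ (A ⊗ N)) ≫ (M ◁ lact) := by
    have lnat : lact ≫ (λ_ N).inv = (λ_ (A ⊗ N)).inv ≫ (𝟙_ C ◁ lact) := by monoidal
    have anat : ((A ⊗ A) ◁ lact) ≫ (α_ A A N).hom
        = (α_ A A (A ⊗ N)).hom ≫ (A ◁ (A ◁ lact)) := by monoidal
    have inner : lact ≫ (λ_ N).inv ≫ ((F.one ≫ F.comul) ▷ N) ≫ (α_ A A N).hom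
        = (λ_ (A ⊗ N)).inv ≫ ((F.one ≫ F.comul) ▷ (A ⊗ N)) ≫
            (α_ A A (A ⊗ N)).hom ≫ (A ◁ (A ◁ lact)) := by
      rw [reassoc_of% lnat, whisker_exchange_assoc, anat]
    have nat3 : (M ◁ (A ◁ (A ◁ lact))) ≫ (α_ M A (A ⊗ N)).inv
        = (α_ M A (A ⊗ (A ⊗ N))).inv ≫ ((M ⊗ A) ◁ (A ◁ lact)) := by monoidal
    calc (α_ M A N).hom ≫ (M ◁ lact) ≫ sepIdem F ract lact
        = (α_ M A N).hom ≫
            (M ◁ (lact ≫ (λ_ N).inv ≫ ((F.one ≫ F.comul) ▷ N) ≫ (α_ A A N).hom)) ≫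
            (α_ M A (A ⊗ N)).inv ≫ (ract ▷ (A ⊗ N)) ≫ (M ◁ lact) := by
          simp only [sepIdem, MonoidalCategory.tensorHom_def, MonoidalCategory.whiskerLeft_comp,
            Category.assoc]
      _ = (α_ M A N).hom ≫
            (M ◁ ((λ_ (A ⊗ N)).inv ≫ ((F.one ≫ F.comul) ▷ (A ⊗ N)) ≫
              (α_ A A (A ⊗ N)).hom ≫ (A ◁ (A ◁ lact)))) ≫
            (α_ M A (A ⊗ N)).inv ≫ (ract ▷ (A ⊗ N)) ≫ (M ◁ lact) := by rw [inner]
      _ = (α_ M A N).hom ≫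
            (M ◁ ((λ_ (A ⊗ N)).inv ≫ ((F.one ≫ F.comul) ▷ (A ⊗ N)) ≫
              (α_ A A (A ⊗ N)).hom)) ≫
            (α_ M A (A ⊗ (A ⊗ N))).inv ≫ ((M ⊗ A) ◁ (A ◁ lact)) ≫
            (ract ▷ (A ⊗ N)) ≫ (M ◁ lact) := by
          rw [MonoidalCategory.whiskerLeft_comp]
          simp only [MonoidalCategory.whiskerLeft_comp, Category.assoc]
          rw [reassoc_of% nat3]
      _ = (α_ M A N).hom ≫
            (M ◁ ((λ_ (A ⊗ N)).inv ≫ ((F.one ≫ F.comul) ▷ (A ⊗ N)) ≫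
              (α_ A A (A ⊗ N)).hom)) ≫
            (α_ M A (A ⊗ (A ⊗ N))).inv ≫ (ract ▷ (A ⊗ (A ⊗ N))) ≫
            (M ◁ ((A ◁ lact) ≫ lact)) := by
          rw [whisker_exchange_assoc]
          simp only [MonoidalCategory.whiskerLeft_comp, Category.assoc]
      _ = (α_ M A N).hom ≫
            (M ◁ ((λ_ (A ⊗ N)).inv ≫ ((F.one ≫ F.comul) ▷ (A ⊗ N)) ≫
              (α_ A A (A ⊗ N)).hom)) ≫
            (α_ M A (A ⊗ (A ⊗ N))).inv ≫ (ract ▷ (A ⊗ (A ⊗ N))) ≫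
            (M ◁ ((α_ A A N).inv ≫ F.mul ▷ N)) ≫ (M ◁ lact) := by
          rw [← hla]
          simp only [MonoidalCategory.whiskerLeft_comp, Category.assoc]
      _ = (α_ M A N).hom ≫
            (M ◁ ((λ_ (A ⊗ N)).inv ≫ ((F.one ≫ F.comul) ▷ (A ⊗ N)) ≫
              (α_ A A (A ⊗ N)).hom)) ≫
            (α_ M A (A ⊗ (A ⊗ N))).inv ≫
            ((M ⊗ A) ◁ ((α_ A A N).inv ≫ (F.mul ▷ N))) ≫
            (ract ▷ (A ⊗ N)) ≫ (M ◁ lact) := by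
          rw [← whisker_exchange_assoc]
      _ = ((M ◁ ((λ_ A).inv ≫ ((F.one ≫ F.comul) ▷ A) ≫ (α_ A A A).hom ≫
              (A ◁ F.mul))) ▷ N) ≫ (α_ M (A ⊗ A) N).hom ≫ (M ◁ (α_ A A N).hom) ≫
            (α_ M A (A ⊗ N)).inv ≫ (ract ▷ (A ⊗ N)) ≫ (M ◁ lact) := by monoidal
      _ = ((M ◁ F.comul) ▷ N) ≫ (α_ M (A ⊗ A) N).hom ≫ (M ◁ (α_ A A N).hom) ≫
            (α_ M A (A ⊗ N)).inv ≫ (ract ▷ (A ⊗ N)) ≫ (M ◁ lact) := by rw [keyL]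
  have p2 : (ract ▷ N) ≫ sepIdem F ract lact
      = (α_ M A N).hom ≫ (M ◁ lact) ≫ sepIdem F ract lact := e2a.trans e2b.symm
  exact ⟨p3 _ _ p2, p2, p3⟩
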